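/- arXiv:1602.07283 — 3 statements merged into one kernel-verified Lean document; each statement's English description precedes it below -/
import Mathlib

section
/- Let h = f + g where f : ℝ^N → ℝ is differentiable with L-Lipschitz gradient and g : ℝ^N → ℝ ∪ {+∞} is proper lower semicontinuous. Let A ∈ SPD(N) with A ⪯ Id, α > 0, β ≥ 0, and suppose x^{n+1} satisfies the inclusion A(xⁿ − x^{n+1})/α − ∇f(xⁿ) + (β/α)A(xⁿ − x^{n-1}) ∈ ∂g(x^{n+1}). Then dist(0, ∂h(x^{n+1})) ≤ (1/α + L)‖x^{n+1} − xⁿ‖ + (β/α)‖xⁿ − x^{n-1}‖. -/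
open Filter Topology

noncomputable def frechetSubdiff {E : Type*} [NormedAddCommGroup E] [InnerProductSpace ℝ E]
    (f : E → EReal) (x : E) : Set E :=
  {v | f x ≠ ⊤ ∧ ∀ ε : ℝ, 0 < ε →
    ∀ᶠ y in 𝓝 x, f x + (((inner ℝ v (y - x) : ℝ) - ε * ‖y - x‖ : ℝ) : EReal) ≤ f y}

noncomputable def limitingSubdiff {E : Type*} [NormedAddCommGroup E] [InnerProductSpace ℝ E]
    (f : E → EReal) (x : E) : Set E :=
  {v | ∃ xs vs : ℕ → E, Tendsto xs atTop (𝓝 x) ∧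
      Tendsto (fun n => f (xs n)) atTop (𝓝 (f x)) ∧
      (∀ n, vs n ∈ frechetSubdiff f (xs n)) ∧ Tendsto vs atTop (𝓝 v)}

noncomputable def lazySlope {E : Type*} [NormedAddCommGroup E] [InnerProductSpace ℝ E]
    (f : E → EReal) (x : E) : ENNReal :=
  ⨅ v ∈ limitingSubdiff f x, (‖v‖₊ : ENNReal)

/-! Adding a differentiable function shifts Fréchet subgradients by its gradient; when the gradient
is continuous this survives the limit defining the limiting subdifferential, so
`∇f(xⁿ⁺¹) + w ∈ ∂h(xⁿ⁺¹)` for the given `w ∈ ∂g(xⁿ⁺¹)`. In that vector `-∇f(xⁿ)` and `∇f(xⁿ⁺¹)`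
combine into a difference bounded by `L‖xⁿ⁺¹ - xⁿ‖`, and the `A`-terms are bounded by `‖A v‖ ≤ ‖v‖`. -/

section Subdifferential

variable {E : Type*} [NormedAddCommGroup E] [InnerProductSpace ℝ E] [CompleteSpace E]

lemma HasGradientAt.add_mem_frechetSubdiff {f : E → ℝ} {g : E → EReal} (hg : ∀ x, g x ≠ ⊥)
    {x w v : E} (hf : HasGradientAt f w x) (hv : v ∈ frechetSubdiff g x) :
    w + v ∈ frechetSubdiff (fun y => (f y : EReal) + g y) x := by
  obtain ⟨hgx, hsub⟩ := hv
  obtain ⟨r, hr⟩ : ∃ r : ℝ, g x = r := ⟨(g x).toReal, (EReal.coe_toReal hgx (hg x)).symm⟩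
  refine ⟨by simp only [hr, ← EReal.coe_add]; exact EReal.coe_ne_top _, fun ε hε => ?_⟩
  have hg_near := hsub (ε / 2) (half_pos hε)
  have hf_near : ∀ᶠ y in 𝓝 x, ‖f y - f x - inner ℝ w (y - x)‖ ≤ ε / 2 * ‖y - x‖ :=
    (hasGradientAt_iff_isLittleO.mp hf).def (half_pos hε)
  filter_upwards [hg_near, hf_near] with y hgy hfy
  by_cases hy : g y = ⊤
  · simp only [hy, EReal.add_top_of_ne_bot (EReal.coe_ne_bot (f y))]
    exact le_top
  obtain ⟨s, hs⟩ : ∃ s : ℝ, g y = s := ⟨(g y).toReal, (EReal.coe_toReal hy (hg y)).symm⟩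
  rw [hr, hs] at hgy ⊢
  norm_cast at hgy ⊢
  rw [Real.norm_eq_abs, abs_le] at hfy
  linarith [hfy.1, inner_add_left (𝕜 := ℝ) w v (y - x)]

lemma add_mem_limitingSubdiff_of_hasGradientAt {f : E → ℝ} {f' : E → E} {g : E → EReal}
    {x v : E} (hf : ∀ y, HasGradientAt f (f' y) y) (hf' : ContinuousAt f' x) (hg : ∀ y, g y ≠ ⊥)
    (hv : v ∈ limitingSubdiff g x) :
    f' x + v ∈ limitingSubdiff (fun y => (f y : EReal) + g y) x := by
  obtain ⟨xs, vs, hxs, hgxs, hvs, hvlim⟩ := hv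
  refine ⟨xs, fun n => f' (xs n) + vs n, hxs, ?_,
    fun n => (hf (xs n)).add_mem_frechetSubdiff hg (hvs n), (hf'.tendsto.comp hxs).add hvlim⟩
  have hfxs : Tendsto (fun n => (f (xs n) : EReal)) atTop (𝓝 (f x)) :=
    (continuous_coe_real_ereal.tendsto _).comp ((hf x).continuousAt.tendsto.comp hxs)
  exact (EReal.continuousAt_add (Or.inl (EReal.coe_ne_top _))
    (Or.inl (EReal.coe_ne_bot _))).tendsto.comp (hfxs.prodMk_nhds hgxs)

end Subdifferential

lemma lazySlope_le_of_mem_limitingSubdiff {E : Type*} [NormedAddCommGroup E]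
    [InnerProductSpace ℝ E] {f : E → EReal} {x v : E} {r : ℝ}
    (hv : v ∈ limitingSubdiff f x) (hr : ‖v‖ ≤ r) : lazySlope f x ≤ ENNReal.ofReal r :=
  calc lazySlope f x ≤ ‖v‖₊ := iInf₂_le v hv
    _ = ENNReal.ofReal ‖v‖ := by rw [← ENNReal.ofReal_coe_nnreal, coe_nnnorm]
    _ ≤ ENNReal.ofReal r := ENNReal.ofReal_le_ofReal hr

lemma norm_inertial_residual_le {E : Type*} [SeminormedAddCommGroup E] [NormedSpace ℝ E]
    {A F : E → E} (hA : ∀ v, ‖A v‖ ≤ ‖v‖) {L : ℝ} (hF : ∀ x y, ‖F x - F y‖ ≤ L * ‖x - y‖)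
    {α β : ℝ} (hα : 0 ≤ α) (hβ : 0 ≤ β) (xnew x xold : E) :
    ‖F xnew + (α⁻¹ • A (x - xnew) - F x + (β / α) • A (x - xold))‖ ≤
      (1 / α + L) * ‖xnew - x‖ + β / α * ‖x - xold‖ := by
  have hsplit : F xnew + (α⁻¹ • A (x - xnew) - F x + (β / α) • A (x - xold)) =
      α⁻¹ • A (x - xnew) + (F xnew - F x) + (β / α) • A (x - xold) := by abel
  rw [hsplit]
  calc _ ≤ ‖α⁻¹ • A (x - xnew)‖ + ‖F xnew - F x‖ + ‖(β / α) • A (x - xold)‖ := norm_add₃_le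
    _ ≤ α⁻¹ * ‖x - xnew‖ + L * ‖xnew - x‖ + β / α * ‖x - xold‖ := by
        rw [norm_smul, norm_smul, Real.norm_of_nonneg (inv_nonneg.2 hα),
          Real.norm_of_nonneg (div_nonneg hβ hα)]
        gcongr
        exacts [hA _, hF _ _, hA _]
    _ = (1 / α + L) * ‖xnew - x‖ + β / α * ‖x - xold‖ := by rw [norm_sub_rev x xnew]; ring

theorem stmt7_general {N : ℕ} (f : EuclideanSpace ℝ (Fin N) → ℝ)
    (f' : EuclideanSpace ℝ (Fin N) → EuclideanSpace ℝ (Fin N))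
    (hf : ∀ x, HasGradientAt f (f' x) x)
    (L : ℝ) (hlip : ∀ x y, ‖f' x - f' y‖ ≤ L * ‖x - y‖)
    (g : EuclideanSpace ℝ (Fin N) → EReal)
    (hproper : (∀ x, g x ≠ ⊥) ∧ ∃ x, g x ≠ ⊤)
    (A : EuclideanSpace ℝ (Fin N) →L[ℝ] EuclideanSpace ℝ (Fin N))
    (hAle : ∀ v, ‖A v‖ ≤ ‖v‖)
    (α β : ℝ) (hα : 0 < α) (hβ : 0 ≤ β)
    (xnext xn xprev : EuclideanSpace ℝ (Fin N))
    (hincl : α⁻¹ • A (xn - xnext) - f' xn + (β / α) • A (xn - xprev) ∈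
        limitingSubdiff g xnext) :
    lazySlope (fun x => (f x : EReal) + g x) xnext ≤
      ENNReal.ofReal ((1 / α + L) * ‖xnext - xn‖ + β / α * ‖xn - xprev‖) := by
  have hf' : Continuous f' :=
    (LipschitzWith.of_dist_le' (by simpa only [dist_eq_norm] using hlip)).continuous
  exact lazySlope_le_of_mem_limitingSubdiff
    (add_mem_limitingSubdiff_of_hasGradientAt hf hf'.continuousAt hproper.1 hincl)
    (norm_inertial_residual_le hAle hlip hα.le hβ xnext xn xprev)

theorem stmt7 {N : ℕ} (f : EuclideanSpace ℝ (Fin N) → ℝ)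
    (f' : EuclideanSpace ℝ (Fin N) → EuclideanSpace ℝ (Fin N))
    (hf : ∀ x, HasGradientAt f (f' x) x)
    (L : ℝ) (hL : 0 < L) (hlip : ∀ x y, ‖f' x - f' y‖ ≤ L * ‖x - y‖)
    (g : EuclideanSpace ℝ (Fin N) → EReal)
    (hproper : (∀ x, g x ≠ ⊥) ∧ ∃ x, g x ≠ ⊤)
    (hlsc : LowerSemicontinuous g)
    (A : EuclideanSpace ℝ (Fin N) →L[ℝ] EuclideanSpace ℝ (Fin N))
    (hsymm : ∀ v w, (inner ℝ (A v) w : ℝ) = (inner ℝ v (A w) : ℝ))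
    (hpos : ∀ v, v ≠ 0 → 0 < (inner ℝ (A v) v : ℝ))
    (hAle : ∀ v, ‖A v‖ ≤ ‖v‖)
    (α β : ℝ) (hα : 0 < α) (hβ : 0 ≤ β)
    (xnext xn xprev : EuclideanSpace ℝ (Fin N))
    (hincl : α⁻¹ • A (xn - xnext) - f' xn + (β / α) • A (xn - xprev) ∈
        limitingSubdiff g xnext) :
    lazySlope (fun x => (f x : EReal) + g x) xnext ≤
      ENNReal.ofReal ((1 / α + L) * ‖xnext - xn‖ + β / α * ‖xn - xprev‖) :=
  stmt7_general f f' hf L hlip g hproper A hAle α β hα hβ xnext xn xprev hincl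
end

section
/- Let (dₙ) be a sequence of nonnegative reals, c ≥ 0, (Dₙ) nonnegative reals with Σₙ Dₙ < ∞, and (εₙ) nonnegative with Σₙ εₙ < ∞. Suppose for all n ≥ n₀: 2dₙ ≤ c Dₙ + (1/2)(dₙ + d_{n-1}) + εₙ. Then Σₙ dₙ < ∞. -/
open Finset

theorem summable_of_le_mul_add {d e : ℕ → ℝ} {q : ℝ} (hd : ∀ n, 0 ≤ d n) (hq₀ : 0 ≤ q)
    (hq : q < 1) (he₀ : ∀ n, 0 ≤ e n) (he : Summable e)
    (h : ∀ n, d (n + 1) ≤ q * d n + e n) : Summable d := by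
  refine summable_of_sum_range_le hd (c := (d 0 + ∑' n, e n) / (1 - q)) fun N => ?_
  have hmono : ∑ i ∈ range N, d i ≤ ∑ i ∈ range (N + 1), d i := by
    rw [sum_range_succ]; linarith [hd N]
  have hstep : ∑ i ∈ range (N + 1), d i
      ≤ d 0 + q * ∑ i ∈ range (N + 1), d i + ∑' n, e n :=
    calc ∑ i ∈ range (N + 1), d i = d 0 + ∑ i ∈ range N, d (i + 1) := by
          rw [sum_range_succ', add_comm]
      _ ≤ d 0 + ∑ i ∈ range N, (q * d i + e i) := by gcongr with i; exact h i
      _ = d 0 + q * ∑ i ∈ range N, d i + ∑ i ∈ range N, e i := by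
          rw [sum_add_distrib, mul_sum]; ring
      _ ≤ d 0 + q * ∑ i ∈ range (N + 1), d i + ∑' n, e n := by
          gcongr d 0 + q * ?_ + ?_
          exact he.sum_le_tsum _ fun i _ => he₀ i
  rw [le_div_iff₀ (by linarith)]
  nlinarith

theorem stmt11 (d D ε : ℕ → ℝ) (c : ℝ) (hc : 0 ≤ c)
    (hd0 : ∀ n, 0 ≤ d n) (hD0 : ∀ n, 0 ≤ D n) (hε0 : ∀ n, 0 ≤ ε n)
    (hD : Summable D) (hε : Summable ε) (n₀ : ℕ)
    (h : ∀ n : ℕ, n₀ ≤ n → 2 * d n ≤ c * D n + 1 / 2 * (d n + d (n - 1)) + ε n) :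
    Summable d := by
  -- Solving the hypothesis at `n + 1` for `d (n + 1)` gives a contraction by the factor `1/3`.
  have hcontract : ∀ i, d (i + 1 + n₀) ≤ 1 / 3 * d (i + n₀)
      + 2 / 3 * (c * D (i + (n₀ + 1)) + ε (i + (n₀ + 1))) := by
    intro i
    have hi := h (i + 1 + n₀) (by omega)
    rw [show i + 1 + n₀ - 1 = i + n₀ by omega, show i + 1 + n₀ = i + (n₀ + 1) by omega] at hi
    rw [show i + 1 + n₀ = i + (n₀ + 1) by omega]
    linarith
  have hD' := (summable_nat_add_iff (n₀ + 1)).2 hD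
  have hε' := (summable_nat_add_iff (n₀ + 1)).2 hε
  refine (summable_nat_add_iff n₀).1 <| summable_of_le_mul_add (q := 1 / 3) (fun i => hd0 _)
    (by norm_num) (by norm_num) (fun i => ?_) ((hD'.mul_left c).add hε' |>.mul_left (2 / 3))
    hcontract
  have := hD0 (i + (n₀ + 1)); have := hε0 (i + (n₀ + 1))
  positivity
end

section
/- Let g : ℝ^N → ℝ ∪ {+∞} be proper lsc, f : ℝ^N → ℝ continuously differentiable. Suppose a subsequence x^{n_j+1} → x* and y^{n_j} → x*, α_{n_j} ≥ α̲ > 0, A_{n_j} ⪯ Id with smallest eigenvalue bounded below by ς̲ > 0, and for all x ∈ ℝ^N: g(x^{n_j+1}) + ⟨∇f(x^{n_j}), x^{n_j+1} − x^{n_j}⟩ + (1/(2α_{n_j}))‖x^{n_j+1} − y^{n_j}‖²_{A_{n_j}} ≤ g(x) + ⟨∇f(x^{n_j}), x − x^{n_j}⟩ + (1/(2α_{n_j}))‖x − y^{n_j}‖²_{A_{n_j}}, with x^{n_j} → x* as well. Then limsup_{j→∞} g(x^{n_j+1}) ≤ g(x*), and combined with lower semicontinuity of g, lim_{j→∞}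 g(x^{n_j+1}) = g(x*). -/
open Filter Topology

/-! Testing the minimality inequality at `x*` bounds `g (x^{n_j+1})` by `g x*` plus the difference of
the two model values at `x*` and at `x^{n_j+1}`. Both vanish in the limit: every argument tends to
`x*`, the gradients stay bounded by continuity, and the quadratic terms are `O(‖·‖²)` uniformly
because `‖A_{n_j} v‖ ≤ ‖v‖` and `α_{n_j} ≥ α̲ > 0`. Lower semicontinuity gives the matching liminf. -/

theorem EReal.le_add_coe_sub_of_add_coe_le {a b : EReal} {r s : ℝ} (h : a + r ≤ b + s) :
    a ≤ b + ((s - r : ℝ) : EReal) := by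
  rw [EReal.coe_sub, ← add_sub_assoc]
  exact (EReal.le_sub_iff_add_le (.inl (EReal.coe_ne_bot r)) (.inl (EReal.coe_ne_top r))).2 h

theorem EReal.limsup_le_of_le_add_coe {ι : Type*} {l : Filter ι} [l.NeBot] {u : ι → EReal}
    {c : EReal} {ε : ι → ℝ} (hu : ∀ᶠ i in l, u i ≤ c + ε i) (hε : Tendsto ε l (𝓝 0)) :
    limsup u l ≤ c := by
  have hcont : ContinuousAt (fun p : EReal × EReal => p.1 + p.2) (c, 0) :=
    EReal.continuousAt_add (.inr EReal.zero_ne_bot) (.inr EReal.zero_ne_top)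
  have hlim : Tendsto (fun i => c + (ε i : EReal)) l (𝓝 c) := by
    simpa [Function.comp_def] using hcont.tendsto.comp (tendsto_const_nhds.prodMk_nhds
      ((continuous_coe_real_ereal.tendsto 0).comp hε))
  exact (limsup_le_limsup hu).trans hlim.limsup_eq.le

theorem tendsto_inner_map_self_zero {ι E : Type*} [NormedAddCommGroup E] [InnerProductSpace ℝ E]
    {l : Filter ι} {T : ι → E → E} (hT : ∀ i v, ‖T i v‖ ≤ ‖v‖) {v : ι → E}
    (hv : Tendsto v l (𝓝 0)) : Tendsto (fun i => (inner ℝ (T i (v i)) (v i) : ℝ)) l (𝓝 0) := by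
  have hsq : Tendsto (fun i => ‖v i‖ ^ 2) l (𝓝 0) := by
    simpa using (tendsto_zero_iff_norm_tendsto_zero.1 hv).pow 2
  refine squeeze_zero_norm (fun i => ?_) hsq
  calc ‖(inner ℝ (T i (v i)) (v i) : ℝ)‖ ≤ ‖T i (v i)‖ * ‖v i‖ := norm_inner_le_norm _ _
    _ ≤ ‖v i‖ ^ 2 := by rw [sq]; gcongr; exact hT i _

theorem tendsto_inner_add_mul_inner_map_self_zero {ι E : Type*} [NormedAddCommGroup E]
    [InnerProductSpace ℝ E] {l : Filter ι} {G : ι → E} {G₀ : E} (hG : Tendsto G l (𝓝 G₀))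
    {c : ι → ℝ} (hc : IsBoundedUnder (· ≤ ·) l (norm ∘ c)) {T : ι → E → E}
    (hT : ∀ i v, ‖T i v‖ ≤ ‖v‖) {u v : ι → E} (hu : Tendsto u l (𝓝 0))
    (hv : Tendsto v l (𝓝 0)) :
    Tendsto (fun i => (inner ℝ (G i) (u i) : ℝ) + c i * (inner ℝ (T i (v i)) (v i) : ℝ)) l
      (𝓝 0) := by
  have hlin : Tendsto (fun i => (inner ℝ (G i) (u i) : ℝ)) l (𝓝 0) := by
    simpa using hG.inner hu
  simpa using hlin.add (isBoundedUnder_le_mul_tendsto_zero hc (tendsto_inner_map_self_zero hT hv))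

theorem stmt15_general {N : ℕ} (g : EuclideanSpace ℝ (Fin N) → EReal)
    (hlsc : LowerSemicontinuous g)
    (f' : EuclideanSpace ℝ (Fin N) → EuclideanSpace ℝ (Fin N))
    (hf'cont : Continuous f')
    -- subsequence data: `xnext j = x^{n_j+1}`, `xcur j = x^{n_j}`, `ycur j = y^{n_j}`
    (xnext xcur ycur : ℕ → EuclideanSpace ℝ (Fin N))
    (xstar : EuclideanSpace ℝ (Fin N))
    (hxnext : Tendsto xnext atTop (𝓝 xstar))
    (hxcur : Tendsto xcur atTop (𝓝 xstar))
    (hycur : Tendsto ycur atTop (𝓝 xstar))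
    (α : ℕ → ℝ) (αbar : ℝ) (hαbar : 0 < αbar) (hα : ∀ j, αbar ≤ α j)
    (A : ℕ → EuclideanSpace ℝ (Fin N) →L[ℝ] EuclideanSpace ℝ (Fin N))
    (hAle : ∀ j v, ‖A j v‖ ≤ ‖v‖)
    (hmin : ∀ j : ℕ, ∀ x : EuclideanSpace ℝ (Fin N),
      g (xnext j) + (((inner ℝ (f' (xcur j)) (xnext j - xcur j) : ℝ) +
          1 / (2 * α j) * (inner ℝ (A j (xnext j - ycur j)) (xnext j - ycur j) : ℝ) : ℝ) : EReal) ≤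
        g x + (((inner ℝ (f' (xcur j)) (x - xcur j) : ℝ) +
          1 / (2 * α j) * (inner ℝ (A j (x - ycur j)) (x - ycur j) : ℝ) : ℝ) : EReal)) :
    limsup (fun j => g (xnext j)) atTop ≤ g xstar ∧
      Tendsto (fun j => g (xnext j)) atTop (𝓝 (g xstar)) := by
  have hstep : IsBoundedUnder (· ≤ ·) atTop (norm ∘ fun j => 1 / (2 * α j)) := by
    refine isBoundedUnder_of ⟨1 / (2 * αbar), fun j => ?_⟩
    have hαj : 0 < α j := hαbar.trans_le (hα j)
    rw [Function.comp_apply, Real.norm_of_nonneg (by positivity)]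
    gcongr
    exact hα j
  have hmodel : ∀ z : ℕ → EuclideanSpace ℝ (Fin N), Tendsto z atTop (𝓝 xstar) →
      Tendsto (fun j => (inner ℝ (f' (xcur j)) (z j - xcur j) : ℝ) +
        1 / (2 * α j) * (inner ℝ (A j (z j - ycur j)) (z j - ycur j) : ℝ)) atTop (𝓝 0) :=
    fun z hz => tendsto_inner_add_mul_inner_map_self_zero ((hf'cont.tendsto xstar).comp hxcur)
      hstep hAle (by simpa using hz.sub hxcur) (by simpa using hz.sub hycur)
  have hlimsup : limsup (fun j => g (xnext j)) atTop ≤ g xstar :=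
    EReal.limsup_le_of_le_add_coe
      (Eventually.of_forall fun j => EReal.le_add_coe_sub_of_add_coe_le (hmin j xstar))
      (by simpa using (hmodel _ tendsto_const_nhds).sub (hmodel _ hxnext))
  exact ⟨hlimsup, tendsto_of_le_liminf_of_limsup_le ((hlsc.le_liminf xstar).trans hxnext.liminf_le_liminf_comp) hlimsup⟩

theorem stmt15 {N : ℕ} (g : EuclideanSpace ℝ (Fin N) → EReal)
    (hproper : (∀ x, g x ≠ ⊥) ∧ ∃ x, g x ≠ ⊤)
    (hlsc : LowerSemicontinuous g)
    (f : EuclideanSpace ℝ (Fin N) → ℝ)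
    (f' : EuclideanSpace ℝ (Fin N) → EuclideanSpace ℝ (Fin N))
    (hf : ∀ x, HasGradientAt f (f' x) x) (hf'cont : Continuous f')
    -- subsequence data: `xnext j = x^{n_j+1}`, `xcur j = x^{n_j}`, `ycur j = y^{n_j}`
    (xnext xcur ycur : ℕ → EuclideanSpace ℝ (Fin N))
    (xstar : EuclideanSpace ℝ (Fin N))
    (hxnext : Tendsto xnext atTop (𝓝 xstar))
    (hxcur : Tendsto xcur atTop (𝓝 xstar))
    (hycur : Tendsto ycur atTop (𝓝 xstar))
    (α : ℕ → ℝ) (αbar : ℝ) (hαbar : 0 < αbar) (hα : ∀ j, αbar ≤ α j)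
    (A : ℕ → EuclideanSpace ℝ (Fin N) →L[ℝ] EuclideanSpace ℝ (Fin N))
    (hsymm : ∀ j v w, (inner ℝ (A j v) w : ℝ) = (inner ℝ v (A j w) : ℝ))
    (hAle : ∀ j v, ‖A j v‖ ≤ ‖v‖)
    (ςbar : ℝ) (hςbar : 0 < ςbar)
    (hA : ∀ j (v : EuclideanSpace ℝ (Fin N)), ςbar * ‖v‖ ^ 2 ≤ (inner ℝ (A j v) v : ℝ))
    (hmin : ∀ j : ℕ, ∀ x : EuclideanSpace ℝ (Fin N),
      g (xnext j) + (((inner ℝ (f' (xcur j)) (xnext j - xcur j) : ℝ) +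
          1 / (2 * α j) * (inner ℝ (A j (xnext j - ycur j)) (xnext j - ycur j) : ℝ) : ℝ) : EReal) ≤
        g x + (((inner ℝ (f' (xcur j)) (x - xcur j) : ℝ) +
          1 / (2 * α j) * (inner ℝ (A j (x - ycur j)) (x - ycur j) : ℝ) : ℝ) : EReal)) :
    limsup (fun j => g (xnext j)) atTop ≤ g xstar ∧
      Tendsto (fun j => g (xnext j)) atTop (𝓝 (g xstar)) :=
  stmt15_general g hlsc f' hf'cont xnext xcur ycur xstar hxnext hxcur hycur α αbar hαbar hα A hAle
    hmin
end
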